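/- Let X be an a-normal space, let α ≤ β be real numbers, and let (D,(r◁,r▷)_{r ∈ D}) be an [α,β]-draft on X with D a closed subset of ℝ. Then there exists an [α,β]-draft (D',(r◁,r▷)_{r ∈ D'}) on X that refines (D,(r◁,r▷)_{r ∈ D}) (i.e., D ⊆ D' and the two drafts agree on D) and such that D' is dense in [α,β]. -/
import Mathlib


open Classical in
/-- The denominator of a real number: the reduced denominator if rational, `0` if irrational. -/
noncomputable def den (r : ℝ) : ℕ :=
  if h : ∃ q : ℚ, (q : ℝ) = r then h.choose.den else 0

/-- `AC ζ Λ`: the points of the a-space `(X, ζ)` that may be sent into `Λ ⊆ ℝ` by a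
denominator-decreasing map. -/
def AC {X : Type*} (ζ : X → ℕ) (Λ : Set ℝ) : Set X := {x | ∃ l ∈ Λ, den l ∣ ζ x}

/-- An a-normal space structure on a topological space `X` with denominator function `ζ`. -/
def ANormal {X : Type*} [TopologicalSpace X] (ζ : X → ℕ) : Prop :=
  CompactSpace X ∧ T2Space X ∧
  (∀ n : ℕ, IsClosed {x : X | ζ x ∣ n}) ∧
  ∀ x y : X, x ≠ y → ∃ U V : Set X, IsOpen U ∧ IsOpen V ∧ x ∈ U ∧ y ∈ V ∧
    Disjoint U V ∧ ∀ z ∈ (U ∪ V)ᶜ, ζ z = 0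

/-- An `[α,β]`-draft on an a-space `(X, ζ)`. -/
def IsDraft {X : Type*} [TopologicalSpace X] (ζ : X → ℕ) (α β : ℝ)
    (D : Set ℝ) (down up : ℝ → Set X) : Prop :=
  D ⊆ Set.Icc α β ∧ α ∈ D ∧ β ∈ D ∧
  (∀ r ∈ D, IsClosed (down r)) ∧ (∀ r ∈ D, IsClosed (up r)) ∧
  up α = Set.univ ∧ down β = Set.univ ∧
  (∀ r ∈ D, down r ∪ up r = Set.univ) ∧
  (∀ r ∈ D, ∀ s ∈ D, r < s → down r ∩ up s = ∅) ∧
  (∀ r ∈ D, ∀ s ∈ D, r ≤ s → up r ∩ down s ⊆ AC ζ (Set.Icc r s))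

lemma den_ratCast (q : ℚ) : den (q : ℝ) = q.den := by
  have h : ∃ p : ℚ, (p : ℝ) = (q : ℝ) := ⟨q, rfl⟩
  have := h.choose_spec
  have hq : h.choose = q := by exact_mod_cast this
  rw [den, dif_pos h, hq]

lemma den_div_nat (k : ℤ) (n : ℕ) : den ((k : ℝ) / (n : ℝ)) ∣ n := by
  have hcast : ((((k : ℚ) / (n : ℚ)) : ℚ) : ℝ) = (k : ℝ) / (n : ℝ) := by push_cast; ring
  rw [← hcast, den_ratCast]
  have h2 : (k : ℚ) / (n : ℚ) = Rat.divInt k n := by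
    rw [Rat.divInt_eq_div]; push_cast; ring
  rw [h2]
  exact_mod_cast Rat.den_dvd k (n : ℤ)

lemma mem_AC_of_zero {X : Type*} {ζ : X → ℕ} {x : X} (hx : ζ x = 0) {r s : ℝ} (hrs : r ≤ s) :
    x ∈ AC ζ (Set.Icc r s) := ⟨r, ⟨le_refl r, hrs⟩, hx ▸ dvd_zero _⟩

lemma mem_AC_of_k {X : Type*} {ζ : X → ℕ} {x : X} (hn : 0 < ζ x) {r s : ℝ} (k : ℤ)
    (h1 : r * ζ x ≤ k) (h2 : (k : ℝ) ≤ s * ζ x) : x ∈ AC ζ (Set.Icc r s) := by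
  have hn' : (0 : ℝ) < (ζ x : ℝ) := by exact_mod_cast hn
  refine ⟨(k : ℝ) / (ζ x : ℝ), ⟨?_, ?_⟩, den_div_nat k (ζ x)⟩
  · rw [le_div_iff₀ hn']; exact h1
  · rw [div_le_iff₀ hn']; exact h2

lemma exists_k_of_mem_AC {X : Type*} {ζ : X → ℕ} {x : X} (hn : ζ x ≠ 0) {r s : ℝ}
    (hx : x ∈ AC ζ (Set.Icc r s)) : ∃ k : ℤ, r * ζ x ≤ k ∧ (k : ℝ) ≤ s * ζ x := by
  obtain ⟨l, ⟨hrl, hls⟩, hdvd⟩ := hx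
  have hq : ∃ q : ℚ, (q : ℝ) = l := by
    by_contra hirr
    rw [den, dif_neg hirr] at hdvd
    exact hn (Nat.eq_zero_of_zero_dvd hdvd)
  obtain ⟨q, rfl⟩ := hq
  rw [den_ratCast] at hdvd
  set n := ζ x with hndef
  set m := n / q.den with hmdef
  have hm : q.den * m = n := Nat.mul_div_cancel' hdvd
  refine ⟨q.num * m, ?_, ?_⟩
  · calc r * n ≤ (q : ℝ) * n := by
          exact mul_le_mul_of_nonneg_right hrl (by positivity)
      _ = (q.num * m : ℤ) := by
          rw [Rat.cast_def]
          have hden : (q.den : ℝ) ≠ 0 := by exact_mod_cast q.den_nz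
          push_cast [← hm]
          field_simp
  · calc ((q.num * m : ℤ) : ℝ) = (q : ℝ) * n := by
          rw [Rat.cast_def]
          have hden : (q.den : ℝ) ≠ 0 := by exact_mod_cast q.den_nz
          push_cast [← hm]
          field_simp
      _ ≤ s * n := mul_le_mul_of_nonneg_right hls (by positivity)

open Classical in
lemma isOpen_AC_Icc {X : Type*} [TopologicalSpace X] {ζ : X → ℕ}
    (hN2 : ∀ n : ℕ, IsClosed {x : X | ζ x ∣ n}) {r s : ℝ} (hrs : r < s) :
    IsOpen (AC ζ (Set.Icc r s)) := by
  set N : ℕ := ⌈1 / (s - r)⌉₊ with hN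
  set F : Finset ℕ :=
    (Finset.Icc 1 N).filter (fun n => ¬ ∃ k : ℤ, r * n ≤ k ∧ (k : ℝ) ≤ s * n) with hF
  have key : (AC ζ (Set.Icc r s))ᶜ = ⋃ n ∈ F, {x : X | ζ x ∣ n} := by
    ext x
    simp only [Set.mem_compl_iff, Set.mem_iUnion, Set.mem_setOf_eq, exists_prop]
    constructor
    · intro hx
      refine ⟨ζ x, ?_, dvd_refl _⟩
      have hn0 : ζ x ≠ 0 := fun h0 => hx (mem_AC_of_zero h0 hrs.le)
      have hnok : ¬ ∃ k : ℤ, r * ζ x ≤ k ∧ (k : ℝ) ≤ s * ζ x := by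
        rintro ⟨k, h1, h2⟩
        exact hx (mem_AC_of_k (Nat.pos_of_ne_zero hn0) k h1 h2)
      rw [hF, Finset.mem_filter, Finset.mem_Icc]
      refine ⟨⟨Nat.one_le_iff_ne_zero.mpr hn0, ?_⟩, hnok⟩
      by_contra hgt
      push_neg at hgt
      have hsr : (0 : ℝ) < s - r := by linarith
      have h1 : (1 : ℝ) / (s - r) ≤ N := Nat.le_ceil _
      have h2 : (N : ℝ) < ζ x := by exact_mod_cast hgt
      have h3 : 1 < (ζ x : ℝ) * (s - r) := by
        have := (div_lt_iff₀ hsr).mp (lt_of_le_of_lt h1 h2)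
        linarith
      refine hnok ⟨⌈r * ζ x⌉, Int.le_ceil _, ?_⟩
      have := Int.ceil_lt_add_one (r * (ζ x : ℝ))
      nlinarith [this]
    · rintro ⟨n, hnF, hdvd⟩ hx
      rw [hF, Finset.mem_filter, Finset.mem_Icc] at hnF
      obtain ⟨⟨hn1, _⟩, hnok⟩ := hnF
      have hn0 : ζ x ≠ 0 := by
        intro h0
        rw [h0] at hdvd
        exact absurd (Nat.eq_zero_of_zero_dvd hdvd) (by omega)
      obtain ⟨k, h1, h2⟩ := exists_k_of_mem_AC hn0 hx
      -- k is a multiple of 1/ζx in [r,s]; scale to denominator n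
      obtain ⟨m, hm⟩ := hdvd
      refine hnok ⟨k * m, ?_, ?_⟩
      · have hm0 : 0 < m := by
          rcases Nat.eq_zero_or_pos m with h | h
          · subst h; simp at hm; omega
          · exact h
        have : (n : ℝ) = (ζ x : ℝ) * m := by exact_mod_cast hm
        rw [this]
        push_cast
        rw [← mul_assoc]
        exact mul_le_mul_of_nonneg_right h1 (by positivity)
      · have : (n : ℝ) = (ζ x : ℝ) * m := by exact_mod_cast hm
        rw [this]
        push_cast
        rw [← mul_assoc]
        exact mul_le_mul_of_nonneg_right h2 (by positivity)
  rw [← isClosed_compl_iff, key]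
  exact Set.Finite.isClosed_biUnion F.finite_toSet (fun n _ => hN2 n)

lemma ANormal.sep_point {X : Type*} [TopologicalSpace X] {ζ : X → ℕ} (hX : ANormal ζ)
    {Q : Set X} (hQ : IsClosed Q) {p : X} (hp : p ∉ Q) :
    ∃ U V : Set X, IsOpen U ∧ IsOpen V ∧ p ∈ U ∧ Q ⊆ V ∧ Disjoint U V ∧
      ∀ z ∈ (U ∪ V)ᶜ, ζ z = 0 := by
  obtain ⟨hc, ht, hN2, hsep⟩ := hX
  have hsep' : ∀ q : Q, ∃ UV : Set X × Set X, IsOpen UV.1 ∧ IsOpen UV.2 ∧ p ∈ UV.1 ∧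
      (q : X) ∈ UV.2 ∧ Disjoint UV.1 UV.2 ∧ ∀ z ∈ (UV.1 ∪ UV.2)ᶜ, ζ z = 0 := by
    intro q
    obtain ⟨U, V, h1, h2, h3, h4, h5, h6⟩ := hsep p q (fun he => hp (he ▸ q.2))
    exact ⟨(U, V), h1, h2, h3, h4, h5, h6⟩
  choose f hf1 hf2 hf3 hf4 hf5 hf6 using hsep'
  have hQc : IsCompact Q := hQ.isCompact
  have hcover : Q ⊆ ⋃ q : Q, (f q).2 := fun x hx => Set.mem_iUnion.mpr ⟨⟨x, hx⟩, hf4 ⟨x, hx⟩⟩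
  obtain ⟨t, ht⟩ := hQc.elim_finite_subcover (fun q : Q => (f q).2) hf2 hcover
  refine ⟨⋂ q ∈ t, (f q).1, ⋃ q ∈ t, (f q).2, ?_, ?_, ?_, ht, ?_, ?_⟩
  · exact Set.Finite.isOpen_biInter t.finite_toSet (fun q _ => hf1 q)
  · exact isOpen_biUnion (fun q _ => hf2 q)
  · exact Set.mem_biInter (fun q _ => hf3 q)
  · rw [Set.disjoint_iff_inter_eq_empty]
    ext z
    simp only [Set.mem_inter_iff, Set.mem_iInter, Set.mem_iUnion, Set.mem_empty_iff_false,
      iff_false, not_and]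
    rintro hz ⟨q, hqt, hzq⟩
    exact Set.disjoint_left.mp (hf5 q) (hz q hqt) hzq
  · intro z hz
    simp only [Set.mem_compl_iff, Set.mem_union, Set.mem_iInter, Set.mem_iUnion, not_or,
      not_exists, not_forall] at hz
    obtain ⟨⟨q, hqt, hzq⟩, hzv⟩ := hz
    apply hf6 q z
    simp only [Set.mem_compl_iff, Set.mem_union, not_or]
    exact ⟨hzq, hzv q hqt⟩

lemma ANormal.sep_closed {X : Type*} [TopologicalSpace X] {ζ : X → ℕ} (hX : ANormal ζ)
    {P Q : Set X} (hP : IsClosed P) (hQ : IsClosed Q) (hPQ : P ∩ Q = ∅) :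
    ∃ U V : Set X, IsOpen U ∧ IsOpen V ∧ P ⊆ U ∧ Q ⊆ V ∧ Disjoint U V ∧
      ∀ z ∈ (U ∪ V)ᶜ, ζ z = 0 := by
  have hc : CompactSpace X := hX.1
  have hsep' : ∀ p : P, ∃ UV : Set X × Set X, IsOpen UV.1 ∧ IsOpen UV.2 ∧ (p : X) ∈ UV.1 ∧
      Q ⊆ UV.2 ∧ Disjoint UV.1 UV.2 ∧ ∀ z ∈ (UV.1 ∪ UV.2)ᶜ, ζ z = 0 := by
    intro p
    have hp : (p : X) ∉ Q := fun hq =>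
      (Set.eq_empty_iff_forall_notMem.mp hPQ p) ⟨p.2, hq⟩
    obtain ⟨U, V, h1, h2, h3, h4, h5, h6⟩ := hX.sep_point hQ hp
    exact ⟨(U, V), h1, h2, h3, h4, h5, h6⟩
  choose f hf1 hf2 hf3 hf4 hf5 hf6 using hsep'
  have hPc : IsCompact P := hP.isCompact
  have hcover : P ⊆ ⋃ p : P, (f p).1 := fun x hx => Set.mem_iUnion.mpr ⟨⟨x, hx⟩, hf3 ⟨x, hx⟩⟩
  obtain ⟨t, ht⟩ := hPc.elim_finite_subcover (fun p : P => (f p).1) hf1 hcover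
  refine ⟨⋃ p ∈ t, (f p).1, ⋂ p ∈ t, (f p).2, ?_, ?_, ht, ?_, ?_, ?_⟩
  · exact isOpen_biUnion (fun p _ => hf1 p)
  · exact Set.Finite.isOpen_biInter t.finite_toSet (fun p _ => hf2 p)
  · exact fun x hx => Set.mem_biInter (fun p _ => hf4 p hx)
  · rw [Set.disjoint_iff_inter_eq_empty]
    ext z
    simp only [Set.mem_inter_iff, Set.mem_iInter, Set.mem_iUnion, Set.mem_empty_iff_false,
      iff_false, not_and]
    rintro ⟨p, hpt, hzp⟩ hz
    exact Set.disjoint_left.mp (hf5 p) hzp (hz p hpt)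
  · intro z hz
    simp only [Set.mem_compl_iff, Set.mem_union, Set.mem_iInter, Set.mem_iUnion, not_or,
      not_exists, not_forall] at hz
    obtain ⟨hzu, p, hpt, hzp⟩ := hz
    apply hf6 p z
    simp only [Set.mem_compl_iff, Set.mem_union, not_or]
    exact ⟨hzu p hpt, hzp⟩

lemma AC_mono {X : Type*} {ζ : X → ℕ} {Λ Λ' : Set ℝ} (h : Λ ⊆ Λ') : AC ζ Λ ⊆ AC ζ Λ' :=
  fun _ ⟨l, hl, hd⟩ => ⟨l, h hl, hd⟩

lemma AC_Icc_split {X : Type*} {ζ : X → ℕ} {r t s : ℝ} (h1 : r ≤ t) (h2 : t ≤ s) {x : X}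
    (hx : x ∈ AC ζ (Set.Icc r s)) : x ∈ AC ζ (Set.Icc r t) ∨ x ∈ AC ζ (Set.Icc t s) := by
  obtain ⟨l, ⟨hrl, hls⟩, hd⟩ := hx
  rcases le_total l t with hl | hl
  · exact Or.inl ⟨l, ⟨hrl, hl⟩, hd⟩
  · exact Or.inr ⟨l, ⟨hl, hls⟩, hd⟩

section
variable {X : Type*} [TopologicalSpace X] {ζ : X → ℕ} {α β : ℝ}
  {D : Set ℝ} {down up : ℝ → Set X}

lemma IsDraft.mem_cover (h : IsDraft ζ α β D down up) {u : ℝ} (hu : u ∈ D) (x : X) :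
    x ∈ down u ∨ x ∈ up u := by
  have := h.2.2.2.2.2.2.2.1 u hu
  have hx : x ∈ down u ∪ up u := this ▸ Set.mem_univ x
  exact hx

lemma IsDraft.down_mono (h : IsDraft ζ α β D down up) {u v : ℝ} (hu : u ∈ D) (hv : v ∈ D)
    (huv : u ≤ v) : down u ⊆ down v := by
  rcases eq_or_lt_of_le huv with rfl | hlt
  · exact le_refl _
  · intro x hx
    rcases h.mem_cover hv x with h' | h'
    · exact h'
    · exact absurd (Set.mem_inter hx h')
        (by rw [h.2.2.2.2.2.2.2.2.1 u hu v hv hlt]; exact Set.notMem_empty x)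

lemma IsDraft.up_anti (h : IsDraft ζ α β D down up) {u v : ℝ} (hu : u ∈ D) (hv : v ∈ D)
    (huv : u ≤ v) : up v ⊆ up u := by
  rcases eq_or_lt_of_le huv with rfl | hlt
  · exact le_refl _
  · intro x hx
    rcases h.mem_cover hu x with h' | h'
    · exact absurd (Set.mem_inter h' hx)
        (by rw [h.2.2.2.2.2.2.2.2.1 u hu v hv hlt]; exact Set.notMem_empty x)
    · exact h'

lemma insert_draft (hX : ANormal ζ) (h : IsDraft ζ α β D down up)
    {r s t : ℝ} (hr : r ∈ D) (hs : s ∈ D) (hrt : r < t) (hts : t < s)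
    (ht : t ∉ D) (hmax : ∀ u ∈ D, u < t → u ≤ r) (hmin : ∀ u ∈ D, t < u → s ≤ u) :
    ∃ A B : Set X,
      IsDraft ζ α β (insert t D) (Function.update down t A) (Function.update up t B) := by
  obtain ⟨hsub, hα, hβ, hdc, huc, huα, hdβ, hcov, hdisj, hAC⟩ := h
  have h' : IsDraft ζ α β D down up :=
    ⟨hsub, hα, hβ, hdc, huc, huα, hdβ, hcov, hdisj, hAC⟩
  have hN2 := hX.2.2.1
  set K : Set X := up r ∩ down s with hK
  have hKclosed : IsClosed K := (huc r hr).inter (hdc s hs)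
  set P : Set X := down r ∪ (K \ AC ζ (Set.Icc t s)) with hP
  set Q : Set X := up s ∪ (K \ AC ζ (Set.Icc r t)) with hQ
  have hPc : IsClosed P := (hdc r hr).union (hKclosed.sdiff (isOpen_AC_Icc hN2 hts))
  have hQc : IsClosed Q := (huc s hs).union (hKclosed.sdiff (isOpen_AC_Icc hN2 hrt))
  have hKAC : K ⊆ AC ζ (Set.Icc r s) := hAC r hr s hs (le_of_lt (hrt.trans hts))
  have hPQ : P ∩ Q = ∅ := by
    rw [Set.eq_empty_iff_forall_notMem]
    rintro x ⟨hxP, hxQ⟩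
    rcases hxP with hxP | ⟨hxK, hxAC⟩
    · rcases hxQ with hxQ | ⟨hxK, hxAC⟩
      · exact absurd (Set.mem_inter hxP hxQ)
          (by rw [hdisj r hr s hs (hrt.trans hts)]; exact Set.notMem_empty x)
      · have hx : x ∈ AC ζ (Set.Icc r r) := hAC r hr r hr le_rfl ⟨hxK.1, hxP⟩
        exact hxAC (AC_mono (Set.Icc_subset_Icc_right hrt.le) hx)
    · rcases hxQ with hxQ | ⟨hxK', hxAC'⟩
      · have hx : x ∈ AC ζ (Set.Icc s s) := hAC s hs s hs le_rfl ⟨hxQ, hxK.2⟩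
        exact hxAC (AC_mono (Set.Icc_subset_Icc_left hts.le) hx)
      · rcases AC_Icc_split hrt.le hts.le (hKAC hxK) with hc | hc
        · exact hxAC' hc
        · exact hxAC hc
  obtain ⟨U, V, hUo, hVo, hPU, hQV, hUV, hz⟩ := hX.sep_closed hPc hQc hPQ
  refine ⟨Vᶜ, Uᶜ, ?_⟩
  set A : Set X := Vᶜ with hA
  set B : Set X := Uᶜ with hB
  set down' := Function.update down t A with hd'
  set up' := Function.update up t B with hu'
  have hne : ∀ u ∈ D, u ≠ t := fun u hu he => ht (he ▸ hu)
  have hdomD : ∀ u ∈ D, down' u = down u ∧ up' u = up u := fun u hu =>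
    ⟨Function.update_of_ne (hne u hu) _ _, Function.update_of_ne (hne u hu) _ _⟩
  have hdt : down' t = A := Function.update_self _ _ _
  have hut : up' t = B := Function.update_self _ _ _
  have hαr : α ≤ r := (hsub hr).1
  have hsβ : s ≤ β := (hsub hs).2
  have hαt : α < t := lt_of_le_of_lt hαr hrt
  have htβ : t < β := lt_of_lt_of_le hts hsβ
  have hdrP : down r ⊆ U := fun x hx => hPU (Or.inl hx)
  have husQ : up s ⊆ V := fun x hx => hQV (Or.inl hx)
  have hAds : A ⊆ down s := by
    intro x hx
    rcases h'.mem_cover hs x with h1 | h1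
    · exact h1
    · exact absurd (husQ h1) hx
  have hBur : B ⊆ up r := by
    intro x hx
    rcases h'.mem_cover hr x with h1 | h1
    · exact absurd (hdrP h1) hx
    · exact h1
  have hKA : ∀ x, x ∈ K → x ∈ A → x ∈ AC ζ (Set.Icc r t) := by
    intro x hxK hxA
    by_contra hna
    exact hxA (hQV (Or.inr ⟨hxK, hna⟩))
  have hKB : ∀ x, x ∈ K → x ∈ B → x ∈ AC ζ (Set.Icc t s) := by
    intro x hxK hxB
    by_contra hna
    exact hxB (hPU (Or.inr ⟨hxK, hna⟩))
  have hcovT : A ∪ B = Set.univ := by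
    rw [Set.eq_univ_iff_forall]
    intro x
    rcases Classical.em (x ∈ V) with hv | hv
    · exact Or.inr (fun hu => Set.disjoint_left.mp hUV hu hv)
    · exact Or.inl hv
  refine ⟨?_, Set.mem_insert_of_mem t hα, Set.mem_insert_of_mem t hβ, ?_, ?_, ?_, ?_, ?_, ?_, ?_⟩
  · rintro u hu
    rcases Set.mem_insert_iff.mp hu with rfl | hu
    · exact ⟨hαt.le, htβ.le⟩
    · exact hsub hu
  · intro u hu
    rcases Set.mem_insert_iff.mp hu with rfl | hu
    · rw [hdt]; exact hVo.isClosed_compl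
    · rw [(hdomD u hu).1]; exact hdc u hu
  · intro u hu
    rcases Set.mem_insert_iff.mp hu with rfl | hu
    · rw [hut]; exact hUo.isClosed_compl
    · rw [(hdomD u hu).2]; exact huc u hu
  · rw [(hdomD α hα).2]; exact huα
  · rw [(hdomD β hβ).1]; exact hdβ
  · intro u hu
    rcases Set.mem_insert_iff.mp hu with rfl | hu
    · rw [hdt, hut]; exact hcovT
    · rw [(hdomD u hu).1, (hdomD u hu).2]; exact hcov u hu
  · intro u hu v hv hlt
    rcases Set.mem_insert_iff.mp hu with hequ | hu
    · rcases Set.mem_insert_iff.mp hv with heqv | hv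
      · rw [hequ, heqv] at hlt; exact absurd hlt (lt_irrefl t)
      · rw [hequ] at hlt ⊢
        rw [hdt, (hdomD v hv).2]
        rw [Set.eq_empty_iff_forall_notMem]
        rintro x ⟨hxA, hxu⟩
        exact hxA (husQ (h'.up_anti hs hv (hmin v hv hlt) hxu))
    · rcases Set.mem_insert_iff.mp hv with heqv | hv
      · rw [heqv] at hlt ⊢
        rw [(hdomD u hu).1, hut]
        rw [Set.eq_empty_iff_forall_notMem]
        rintro x ⟨hxd, hxB⟩
        exact hxB (hdrP (h'.down_mono hu hr (hmax u hu hlt) hxd))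
      · rw [(hdomD u hu).1, (hdomD v hv).2]; exact hdisj u hu v hv hlt
  · intro u hu v hv hle
    rcases Set.mem_insert_iff.mp hu with hequ | hu
    · rcases Set.mem_insert_iff.mp hv with heqv | hv
      · rw [hequ, heqv]
        rw [hut, hdt]
        rintro x ⟨hxB, hxA⟩
        have h0 : ζ x = 0 := hz x (by
          simp only [Set.mem_compl_iff, Set.mem_union, not_or]
          exact ⟨fun hxu => hxB hxu, fun hxv => hxA hxv⟩)
        exact mem_AC_of_zero h0 le_rfl
      · -- u = t, v ∈ D : up' t ∩ down' v ⊆ AC [t,v]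
        rw [hequ] at hle ⊢
        have htv : t < v := lt_of_le_of_ne hle (fun he => ht (he ▸ hv))
        have hsv : s ≤ v := hmin v hv htv
        rw [hut, (hdomD v hv).1]
        rintro x ⟨hxB, hxd⟩
        rcases h'.mem_cover hs x with h1 | h1
        · have hxK : x ∈ K := ⟨hBur hxB, h1⟩
          exact AC_mono (Set.Icc_subset_Icc_right hsv) (hKB x hxK hxB)
        · have hx : x ∈ AC ζ (Set.Icc s v) := hAC s hs v hv hsv ⟨h1, hxd⟩
          exact AC_mono (Set.Icc_subset_Icc_left hts.le) hx
    · rcases Set.mem_insert_iff.mp hv with heqv | hv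
      · -- u ∈ D, v = t : up' u ∩ down' t ⊆ AC [u,t]
        rw [heqv] at hle ⊢
        have hut' : u < t := lt_of_le_of_ne hle (hne u hu)
        have hur : u ≤ r := hmax u hu hut'
        rw [(hdomD u hu).2, hdt]
        rintro x ⟨hxu, hxA⟩
        rcases h'.mem_cover hr x with h1 | h1
        · have hx : x ∈ AC ζ (Set.Icc u r) := hAC u hu r hr hur ⟨hxu, h1⟩
          exact AC_mono (Set.Icc_subset_Icc_right hrt.le) hx
        · have hxK : x ∈ K := ⟨h1, hAds hxA⟩
          exact AC_mono (Set.Icc_subset_Icc_left hur) (hKA x hxK hxA)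
      · rw [(hdomD u hu).2, (hdomD v hv).1]; exact hAC u hu v hv hle
end

def GoodAux {X : Type*} [TopologicalSpace X] (ζ : X → ℕ) (α β : ℝ) (D : Set ℝ)
    (p : Set ℝ × (ℝ → Set X) × (ℝ → Set X)) : Prop :=
  IsDraft ζ α β p.1 p.2.1 p.2.2 ∧ D ⊆ p.1 ∧ ∃ F : Set ℝ, F.Finite ∧ p.1 = D ∪ F

lemma step_aux {X : Type*} [TopologicalSpace X] {ζ : X → ℕ} (hX : ANormal ζ) {α β : ℝ}
    {D : Set ℝ} (hDclosed : IsClosed D) (p : Set ℝ × (ℝ → Set X) × (ℝ → Set X))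
    (hp : GoodAux ζ α β D p) {t : ℝ} (ht : t ∈ Set.Icc α β) :
    ∃ p' : Set ℝ × (ℝ → Set X) × (ℝ → Set X), GoodAux ζ α β D p' ∧ p.1 ⊆ p'.1 ∧ t ∈ p'.1 ∧
      ∀ x ∈ p.1, p'.2.1 x = p.2.1 x ∧ p'.2.2 x = p.2.2 x := by
  obtain ⟨hdraft, hDsub, F, hF, hEF⟩ := hp
  obtain ⟨E, d, u⟩ := p
  simp only at hdraft hDsub hEF ⊢
  by_cases htE : t ∈ E
  · exact ⟨(E, d, u), ⟨hdraft, hDsub, F, hF, hEF⟩, le_refl _, htE, fun x _ => ⟨rfl, rfl⟩⟩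
  have hEclosed : IsClosed E := hEF ▸ hDclosed.union hF.isClosed
  have hαE : α ∈ E := hdraft.2.1
  have hβE : β ∈ E := hdraft.2.2.1
  have hEI : E ⊆ Set.Icc α β := hdraft.1
  -- the greatest element of E below t
  have hGc : IsCompact (E ∩ Set.Icc α t) :=
    IsCompact.of_isClosed_subset isCompact_Icc (hEclosed.inter isClosed_Icc)
      Set.inter_subset_right
  have hGne : (E ∩ Set.Icc α t).Nonempty := ⟨α, hαE, le_refl α, ht.1⟩
  obtain ⟨r, hrG, hrub⟩ := hGc.exists_isGreatest hGne
  have hrt : r < t := lt_of_le_of_ne hrG.2.2 (fun he => htE (he ▸ hrG.1))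
  -- the least element of E above t
  have hLc : IsCompact (E ∩ Set.Icc t β) :=
    IsCompact.of_isClosed_subset isCompact_Icc (hEclosed.inter isClosed_Icc)
      Set.inter_subset_right
  have hLne : (E ∩ Set.Icc t β).Nonempty := ⟨β, hβE, ht.2, le_refl β⟩
  obtain ⟨s, hsL, hslb⟩ := hLc.exists_isLeast hLne
  have hts : t < s := lt_of_le_of_ne hsL.2.1 (fun he => htE (he ▸ hsL.1))
  have hmax : ∀ w ∈ E, w < t → w ≤ r := fun w hw hwt =>
    hrub ⟨hw, (hEI hw).1, hwt.le⟩
  have hmin : ∀ w ∈ E, t < w → s ≤ w := fun w hw hwt =>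
    hslb ⟨hw, hwt.le, (hEI hw).2⟩
  obtain ⟨A, B, hdraft'⟩ := insert_draft hX hdraft hrG.1 hsL.1 hrt hts htE hmax hmin
  refine ⟨(insert t E, Function.update d t A, Function.update u t B),
    ⟨hdraft', hDsub.trans (Set.subset_insert t E), insert t F, hF.insert t, ?_⟩,
    Set.subset_insert t E, Set.mem_insert t E, ?_⟩
  · simp only
    rw [hEF, Set.union_insert]
  · intro x hx
    have hne : x ≠ t := fun he => htE (he ▸ hx)
    exact ⟨Function.update_of_ne hne _ _, Function.update_of_ne hne _ _⟩

/-- Any draft on a closed subset `D ⊆ ℝ` of an a-normal space can be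
refined to a draft on a set `D'` dense in `[α,β]`. -/
theorem draft_refinement_to_dense
    {X : Type*} [TopologicalSpace X] (ζ : X → ℕ) (hX : ANormal ζ)
    (α β : ℝ) (hαβ : α ≤ β) (D : Set ℝ) (down up : ℝ → Set X)
    (h : IsDraft ζ α β D down up) (hDclosed : IsClosed D) :
    ∃ (D' : Set ℝ) (down' up' : ℝ → Set X),
      D ⊆ D' ∧
      (∀ r ∈ D, down' r = down r ∧ up' r = up r) ∧
      IsDraft ζ α β D' down' up' ∧
      Set.Icc α β ⊆ closure D' := by
  classical
  -- countable dense sequence in [α,β]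
  have hne : Nonempty (Set.Icc α β) := ⟨⟨α, le_refl α, hαβ⟩⟩
  obtain ⟨E, hEc, hEd⟩ := TopologicalSpace.exists_countable_dense (Set.Icc α β)
  obtain ⟨g, hg⟩ := Set.Countable.exists_eq_range hEc (hEd.nonempty)
  set q : ℕ → ℝ := fun n => (g n : ℝ) with hqdef
  have hq : ∀ n, q n ∈ Set.Icc α β := fun n => (g n).2
  have hdenseq : Set.Icc α β ⊆ closure (Set.range q) := by
    intro x hx
    have hx' : (⟨x, hx⟩ : Set.Icc α β) ∈ closure E := hEd _
    rw [closure_subtype] at hx'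
    have : (Subtype.val '' E) = Set.range q := by
      rw [hg, ← Set.range_comp]
      rfl
    rwa [this] at hx'
  -- the iterative refinement
  have step2 : ∀ (p : Set ℝ × (ℝ → Set X) × (ℝ → Set X)) (n : ℕ),
      ∃ p' : Set ℝ × (ℝ → Set X) × (ℝ → Set X),
        GoodAux ζ α β D p → (GoodAux ζ α β D p' ∧ p.1 ⊆ p'.1 ∧ q n ∈ p'.1 ∧
          ∀ x ∈ p.1, p'.2.1 x = p.2.1 x ∧ p'.2.2 x = p.2.2 x) := by
    intro p n
    by_cases hp : GoodAux ζ α β D p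
    · obtain ⟨p', hp'⟩ := step_aux hX hDclosed p hp (hq n)
      exact ⟨p', fun _ => hp'⟩
    · exact ⟨p, fun h' => absurd h' hp⟩
  choose f hf using step2
  set seq : ℕ → Set ℝ × (ℝ → Set X) × (ℝ → Set X) :=
    fun n => Nat.rec (D, down, up) (fun n ih => f ih n) n with hseq
  have hseq0 : seq 0 = (D, down, up) := rfl
  have hseqS : ∀ n, seq (n + 1) = f (seq n) n := fun n => rfl
  have hgood : ∀ n, GoodAux ζ α β D (seq n) := by
    intro n
    induction n with
    | zero => exact ⟨h, le_refl D, ∅, Set.finite_empty, (Set.union_empty D).symm⟩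
    | succ n ih =>
      rw [hseqS n]
      exact (hf (seq n) n ih).1
  have hmono1 : ∀ n, (seq n).1 ⊆ (seq (n + 1)).1 := by
    intro n
    rw [hseqS n]
    exact (hf (seq n) n (hgood n)).2.1
  have hmem : ∀ n, q n ∈ (seq (n + 1)).1 := by
    intro n
    rw [hseqS n]
    exact (hf (seq n) n (hgood n)).2.2.1
  have hagree1 : ∀ n, ∀ x ∈ (seq n).1,
      (seq (n + 1)).2.1 x = (seq n).2.1 x ∧ (seq (n + 1)).2.2 x = (seq n).2.2 x := by
    intro n
    rw [hseqS n]
    exact (hf (seq n) n (hgood n)).2.2.2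
  have hmono : ∀ m n, m ≤ n → (seq m).1 ⊆ (seq n).1 := by
    intro m n hmn
    induction n with
    | zero => rw [Nat.le_zero.mp hmn]
    | succ n ih =>
      rcases Nat.lt_or_ge m (n + 1) with h' | h'
      · exact (ih (Nat.lt_succ_iff.mp h')).trans (hmono1 n)
      · rw [Nat.le_antisymm hmn h']
  have hstable : ∀ m n, m ≤ n → ∀ x ∈ (seq m).1,
      (seq n).2.1 x = (seq m).2.1 x ∧ (seq n).2.2 x = (seq m).2.2 x := by
    intro m n hmn
    induction n with
    | zero => rw [Nat.le_zero.mp hmn]; exact fun x _ => ⟨rfl, rfl⟩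
    | succ n ih =>
      rcases Nat.lt_or_ge m (n + 1) with h' | h'
      · intro x hx
        have h1 := ih (Nat.lt_succ_iff.mp h') x hx
        have h2 := hagree1 n x (hmono m n (Nat.lt_succ_iff.mp h') hx)
        exact ⟨h2.1.trans h1.1, h2.2.trans h1.2⟩
      · rw [Nat.le_antisymm hmn h']
        exact fun x _ => ⟨rfl, rfl⟩
  -- the limit draft
  set D' : Set ℝ := ⋃ n, (seq n).1 with hD'
  set down' : ℝ → Set X := fun x =>
    if hx : ∃ n, x ∈ (seq n).1 then (seq (Nat.find hx)).2.1 x else down x with hdown'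
  set up' : ℝ → Set X := fun x =>
    if hx : ∃ n, x ∈ (seq n).1 then (seq (Nat.find hx)).2.2 x else up x with hup'
  have hval : ∀ x (n : ℕ), x ∈ (seq n).1 →
      down' x = (seq n).2.1 x ∧ up' x = (seq n).2.2 x := by
    intro x n hx
    have hex : ∃ n, x ∈ (seq n).1 := ⟨n, hx⟩
    have hfind : Nat.find hex ≤ n := Nat.find_min' hex hx
    have hxf : x ∈ (seq (Nat.find hex)).1 := Nat.find_spec hex
    have hst := hstable (Nat.find hex) n hfind x hxf
    constructor
    · rw [hdown']
      simp only [dif_pos hex]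
      exact hst.1.symm
    · rw [hup']
      simp only [dif_pos hex]
      exact hst.2.symm
  have hmemD' : ∀ (n : ℕ) (x : ℝ), x ∈ (seq n).1 → x ∈ D' := fun n x hx =>
    Set.mem_iUnion.mpr ⟨n, hx⟩
  have hD'mem : ∀ x ∈ D', ∃ n, x ∈ (seq n).1 := fun x hx => Set.mem_iUnion.mp hx
  have hDsub : D ⊆ D' := fun x hx => hmemD' 0 x hx
  have hagreeD : ∀ r ∈ D, down' r = down r ∧ up' r = up r := fun r hr => hval r 0 hr
  refine ⟨D', down', up', hDsub, hagreeD, ⟨?_, hDsub h.2.1, hDsub h.2.2.1, ?_, ?_, ?_, ?_, ?_, ?_, ?_⟩, ?_⟩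
  · -- D' ⊆ Icc
    exact Set.iUnion_subset (fun n => (hgood n).1.1)
  · -- down' closed
    intro r hr
    obtain ⟨n, hn⟩ := hD'mem r hr
    rw [(hval r n hn).1]
    exact (hgood n).1.2.2.2.1 r hn
  · intro r hr
    obtain ⟨n, hn⟩ := hD'mem r hr
    rw [(hval r n hn).2]
    exact (hgood n).1.2.2.2.2.1 r hn
  · rw [(hagreeD α h.2.1).2]
    exact h.2.2.2.2.2.1
  · rw [(hagreeD β h.2.2.1).1]
    exact h.2.2.2.2.2.2.1
  · intro r hr
    obtain ⟨n, hn⟩ := hD'mem r hr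
    rw [(hval r n hn).1, (hval r n hn).2]
    exact (hgood n).1.2.2.2.2.2.2.2.1 r hn
  · intro r hr s hs hrs
    obtain ⟨n1, hn1⟩ := hD'mem r hr
    obtain ⟨n2, hn2⟩ := hD'mem s hs
    have hr' : r ∈ (seq (max n1 n2)).1 := hmono n1 _ (le_max_left _ _) hn1
    have hs' : s ∈ (seq (max n1 n2)).1 := hmono n2 _ (le_max_right _ _) hn2
    rw [(hval r _ hr').1, (hval s _ hs').2]
    exact (hgood (max n1 n2)).1.2.2.2.2.2.2.2.2.1 r hr' s hs' hrs
  · intro r hr s hs hrs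
    obtain ⟨n1, hn1⟩ := hD'mem r hr
    obtain ⟨n2, hn2⟩ := hD'mem s hs
    have hr' : r ∈ (seq (max n1 n2)).1 := hmono n1 _ (le_max_left _ _) hn1
    have hs' : s ∈ (seq (max n1 n2)).1 := hmono n2 _ (le_max_right _ _) hn2
    rw [(hval r _ hr').2, (hval s _ hs').1]
    exact (hgood (max n1 n2)).1.2.2.2.2.2.2.2.2.2 r hr' s hs' hrs
  · -- density
    refine hdenseq.trans (closure_mono ?_)
    rintro x ⟨n, rfl⟩
    exact hmemD' (n + 1) (q n) (hmem n)
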